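/- Define θ̄z(θ1) = (−(θ1 + 5) + 2√(4θ1² + 10θ1 + 5)) / (−5θ1) for θ1 > 0. Then θ̄z(θ1) > 0 for all 0 < θ1 < (2√3 − 3)/3, and θ̄z((2√3 − 3)/3) = 0. -/
import Mathlib


noncomputable def thetaBar (t1 : ℝ) : ℝ :=
  (-(t1 + 5) + 2 * Real.sqrt (4*t1^2 + 10*t1 + 5)) / (-(5*t1))

theorem stmt_4 :
    (∀ t1 : ℝ, 0 < t1 → t1 < (2*Real.sqrt 3 - 3)/3 → 0 < thetaBar t1) ∧
    thetaBar ((2*Real.sqrt 3 - 3)/3) = 0 := by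
  have h3 : Real.sqrt 3 ^ 2 = 3 := Real.sq_sqrt (by norm_num)
  have h3pos : (0:ℝ) < Real.sqrt 3 := Real.sqrt_pos.mpr (by norm_num)
  constructor
  · intro t1 ht0 ht1
    have key : 3 * t1 ^ 2 + 6 * t1 - 1 < 0 := by nlinarith
    have hs : Real.sqrt (4*t1^2 + 10*t1 + 5) < (t1 + 5) / 2 := by
      rw [show (4*t1^2 + 10*t1 + 5 : ℝ) = ((t1+5)/2)^2 + (3*t1^2+6*t1-1)*5/4 by ring]
      have := Real.sqrt_lt' (x := ((t1+5)/2)^2 + (3*t1^2+6*t1-1)*5/4) (y := (t1+5)/2)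
        (by linarith)
      rw [this]; nlinarith
    unfold thetaBar
    apply div_pos_of_neg_of_neg <;> nlinarith
  · set t1 : ℝ := (2*Real.sqrt 3 - 3)/3 with ht1def
    have ht0 : 0 < t1 := by
      have : (3:ℝ) < 2 * Real.sqrt 3 := by nlinarith
      rw [ht1def]; linarith
    have hsq : (4*t1^2 + 10*t1 + 5 : ℝ) = ((t1+5)/2)^2 := by
      rw [ht1def]; nlinarith [h3]
    unfold thetaBar
    rw [hsq, Real.sqrt_sq (by linarith)]
    field_simp
    ring
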